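/- arXiv:2507.03212 — 4 statements merged into one kernel-verified Lean document; each statement's English description precedes it below -/
import Mathlib

section
/- Let P be a polytope and x, y distinct vertices of P. Then [x,y] is an edge of P if and only if conv({x,y}) ∩ conv(Vert(P) \ {x,y}) = ∅. -/
/-- `[x,y]` is an edge (1-face) of the polytope `P`: the segment `conv{x,y}` is
an exposed face of `P` (intersection of `P` with a supporting hyperplane). -/
def IsEdgeOf {n : ℕ} (P : Set (Fin n → ℝ)) (x y : Fin n → ℝ) : Prop :=
  IsExposed ℝ P (segment ℝ x y)

/-- Extreme point of `P` lying on a segment between two points of `P` is an endpoint. -/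
theorem extremePoint_mem_segment {E : Type*} [AddCommGroup E] [Module ℝ E] {P : Set E}
    {x y s : E} (hx : x ∈ P) (hy : y ∈ P) (hs : s ∈ Set.extremePoints ℝ P)
    (hseg : s ∈ segment ℝ x y) : s = x ∨ s = y := by
  by_contra h
  push_neg at h
  have hmem := mem_openSegment_of_ne_left_right (Ne.symm h.1) (Ne.symm h.2) hseg
  exact h.1 ((mem_extremePoints.1 hs).2 _ hx _ hy hmem).1.symm

/-- A point of a convex set on the line through two extreme points lies on the segment. -/
theorem line_mem_segment {E : Type*} [AddCommGroup E] [Module ℝ E] {P : Set E}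
    {x y q : E} (hx : x ∈ Set.extremePoints ℝ P) (hy : y ∈ Set.extremePoints ℝ P)
    (hxy : x ≠ y) (hq : q ∈ P) {t : ℝ} (ht : q = x + t • (x - y)) :
    q ∈ segment ℝ x y := by
  rcases le_or_gt t 0 with h0 | h0
  · rcases le_or_gt (-1) t with h1 | h1
    · rw [segment_eq_image]
      refine ⟨-t, ⟨neg_nonneg.2 h0, by linarith⟩, ?_⟩
      rw [ht]; module
    · exfalso
      have htne : t ≠ 0 := by linarith
      have hmem : y ∈ openSegment ℝ q x := by
        have hinv : t⁻¹ < 0 := inv_lt_zero.mpr (by linarith)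
        have hkey : (0:ℝ) < (t + 1) * t⁻¹ :=
          mul_pos_of_neg_of_neg (by linarith) hinv
        have hcan : t * t⁻¹ = 1 := mul_inv_cancel₀ htne
        refine ⟨-t⁻¹, 1 + t⁻¹, by linarith, by nlinarith, by ring, ?_⟩
        rw [ht]; match_scalars <;> field_simp <;> ring
      have := (mem_extremePoints.1 hy).2 _ hq _ hx.1 hmem
      exact hxy this.2
  · exfalso
    have h1t : (1 : ℝ) + t ≠ 0 := by linarith
    have hmem : x ∈ openSegment ℝ q y := by
      refine ⟨(1 + t)⁻¹, t / (1 + t), by positivity, by positivity, ?_, ?_⟩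
      · field_simp
      · rw [ht]; match_scalars <;> field_simp <;> ring
    have := (mem_extremePoints.1 hx).2 _ hq _ hy.1 hmem
    exact hxy this.2.symm

/-- Finite-dimensional Minkowski: a polytope is the convex hull of its extreme points. -/
theorem poly_eq_convexHull_extremePoints {n : ℕ} (Q : Finset (Fin n → ℝ)) :
    convexHull ℝ (↑Q : Set (Fin n → ℝ)) =
      convexHull ℝ (Set.extremePoints ℝ (convexHull ℝ (↑Q : Set (Fin n → ℝ)))) := by
  have hcomp : IsCompact (convexHull ℝ (↑Q : Set (Fin n → ℝ))) :=
    Q.finite_toSet.isCompact_convexHull ℝ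
  have hfin : (Set.extremePoints ℝ (convexHull ℝ (↑Q : Set (Fin n → ℝ)))).Finite :=
    Q.finite_toSet.subset extremePoints_convexHull_subset
  have h := closure_convexHull_extremePoints hcomp (convex_convexHull ℝ _)
  rw [(hfin.isClosed_convexHull ℝ).closure_eq] at h
  exact h.symm

/-- For distinct vertices `x, y` of a polytope `P`, the segment `[x,y]` is an edge
of `P` iff `conv{x,y}` is disjoint from the convex hull of the remaining vertices. -/
theorem stmt2 {n : ℕ} (Q : Finset (Fin n → ℝ)) (P : Set (Fin n → ℝ))
    (hP : P = convexHull ℝ (↑Q : Set (Fin n → ℝ)))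
    (x y : Fin n → ℝ)
    (hx : x ∈ Set.extremePoints ℝ P) (hy : y ∈ Set.extremePoints ℝ P)
    (hxy : x ≠ y) :
    IsEdgeOf P x y ↔
      segment ℝ x y ∩ convexHull ℝ (Set.extremePoints ℝ P \ {x, y}) = ∅ := by
  have hPconv : Convex ℝ P := hP ▸ convex_convexHull ℝ _
  have hPcomp : IsCompact P := hP ▸ Q.finite_toSet.isCompact_convexHull ℝ
  set S : Set (Fin n → ℝ) := Set.extremePoints ℝ P \ {x, y} with hSdef
  have hSsub : S ⊆ P := fun s hs => extremePoints_subset hs.1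
  have hSfin : S.Finite := by
    rw [hSdef, hP]
    exact (Q.finite_toSet.subset extremePoints_convexHull_subset).diff
  have hconvS : convexHull ℝ S ⊆ P := convexHull_min hSsub hPconv
  have hKM : P = convexHull ℝ (Set.extremePoints ℝ P) := by
    rw [hP]; exact poly_eq_convexHull_extremePoints Q
  constructor
  · intro hedge
    rw [Set.eq_empty_iff_forall_notMem]
    rintro z ⟨hzseg, hzconv⟩
    obtain ⟨l, hl⟩ := hedge ⟨x, left_mem_segment ℝ x y⟩
    have hz : z ∈ {z ∈ P | ∀ w ∈ P, l w ≤ l z} := hl ▸ hzseg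
    have hex : ∃ s ∈ S, l z ≤ l s := by
      by_contra hcon
      push_neg at hcon
      have hsub : convexHull ℝ S ⊆ {w | l w < l z} := by
        refine convexHull_min (fun s hs => hcon s hs) ?_
        have hlin : IsLinearMap ℝ (fun w : Fin n → ℝ => l w) := ⟨map_add l, map_smul l⟩
        exact convex_halfSpace_lt (𝕜 := ℝ) (β := ℝ) hlin (l z)
      exact lt_irrefl (l z) (hsub hzconv)
    obtain ⟨s, hsS, hls⟩ := hex
    have hsface : s ∈ segment ℝ x y := by
      rw [hl]
      exact ⟨hSsub hsS, fun w hw => le_trans (hz.2 w hw) hls⟩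
    rcases extremePoint_mem_segment hx.1 hy.1 hsS.1 hsface with h | h <;>
      exact hsS.2 (by simp [h])
  · intro hdisj
    obtain ⟨i, hi⟩ : ∃ i, x i ≠ y i := by
      by_contra hcon; push_neg at hcon; exact hxy (funext hcon)
    set h : (Fin n → ℝ) →L[ℝ] ℝ :=
      (x i - y i)⁻¹ • (ContinuousLinearMap.proj i : (Fin n → ℝ) →L[ℝ] ℝ) with hhdef
    have hh : h (x - y) = 1 := by
      simp only [hhdef, ContinuousLinearMap.smul_apply, ContinuousLinearMap.proj_apply,
        Pi.sub_apply, smul_eq_mul]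
      exact inv_mul_cancel₀ (sub_ne_zero.mpr hi)
    set π : (Fin n → ℝ) →L[ℝ] (Fin n → ℝ) :=
      ContinuousLinearMap.id ℝ _ - h.smulRight (x - y) with hπdef
    have hπ : ∀ v, π v = v - h v • (x - y) := fun v => rfl
    have hπxy : π x = π y := by
      rw [hπ, hπ]
      have e : (h x - h y) • (x - y) = x - y := by rw [← map_sub, hh, one_smul]
      linear_combination (norm := module) -e
    have hπnot : π x ∉ convexHull ℝ (⇑π '' S) := by
      intro hmem
      have hmem' : π x ∈ ⇑π '' convexHull ℝ S := by
        have himg : ⇑π '' convexHull ℝ S = convexHull ℝ (⇑π '' S) :=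
          (π : (Fin n → ℝ) →ₗ[ℝ] (Fin n → ℝ)).isLinear.image_convexHull S
        rw [himg]; exact hmem
      obtain ⟨q, hq, hπq⟩ := hmem'
      have hq' : q = x + (h q - h x) • (x - y) := by
        have e : q - h q • (x - y) = x - h x • (x - y) := by rw [← hπ, ← hπ, hπq]
        linear_combination (norm := module) e
      have hqseg := line_mem_segment hx hy hxy (hconvS hq) hq'
      have hcontra : q ∈ segment ℝ x y ∩ convexHull ℝ S := ⟨hqseg, hq⟩
      rw [hdisj] at hcontra
      exact hcontra
    obtain ⟨g, u, hgS, hgx⟩ :=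
      geometric_hahn_banach_closed_point (convex_convexHull ℝ _)
        ((hSfin.image _).isClosed_convexHull ℝ) hπnot
    set f : (Fin n → ℝ) →L[ℝ] ℝ := g.comp π with hfdef
    have hfxy : f x = f y := by simp [hfdef, hπxy]
    have hfS : ∀ s ∈ S, f s < f x := fun s hs =>
      lt_trans (hgS _ (subset_convexHull ℝ _ ⟨s, hs, rfl⟩)) hgx
    have hfmax : ∀ w ∈ P, f w ≤ f x := by
      intro w hw
      have hsub : Set.extremePoints ℝ P ⊆ {w | f w ≤ f x} := by
        intro v hv
        by_cases hvS : v ∈ S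
        · exact le_of_lt (hfS v hvS)
        · have hv2 : v ∈ ({x, y} : Set (Fin n → ℝ)) := by
            by_contra hcon; exact hvS ⟨hv, hcon⟩
          rcases hv2 with h2 | h2
          · exact le_of_eq (congrArg f h2)
          · exact le_of_eq ((congrArg f h2).trans hfxy.symm)
      have hsub2 : P ⊆ {w | f w ≤ f x} := by
        rw [hKM]
        exact convexHull_min hsub
          (convex_halfSpace_le ⟨map_add f, map_smul f⟩ (f x))
      exact hsub2 hw
    intro _
    refine ⟨f, ?_⟩
    set F : Set (Fin n → ℝ) := {z ∈ P | ∀ w ∈ P, f w ≤ f z} with hFdef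
    have hexp : IsExposed ℝ P F := fun _ => ⟨f, rfl⟩
    apply Set.Subset.antisymm
    · intro z hz
      have hzP : z ∈ P := hPconv.segment_subset hx.1 hy.1 hz
      obtain ⟨a, b, ha, hb, hab, hzeq⟩ := hz
      have hfz : f z = f x := by
        rw [← hzeq]
        simp only [map_add, map_smul, smul_eq_mul, ← hfxy]
        linear_combination (f x) * hab
      exact ⟨hzP, fun w hw => hfz ▸ hfmax w hw⟩
    · have hFconv : Convex ℝ F := hexp.convex hPconv
      have hFclosed : IsClosed F := hexp.isClosed hPcomp.isClosed
      have hFcomp : IsCompact F := hPcomp.of_isClosed_subset hFclosed hexp.subset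
      have hFext : Set.extremePoints ℝ F ⊆ ({x, y} : Set (Fin n → ℝ)) := by
        intro v hv
        rw [hexp.isExtreme.extremePoints_eq] at hv
        by_contra hcon
        have hvS : v ∈ S := ⟨hv.2, hcon⟩
        exact absurd (hv.1.2 x hx.1) (not_le.mpr (hfS v hvS))
      have hKMF := closure_convexHull_extremePoints hFcomp hFconv
      rw [← hKMF]
      have hsub3 : convexHull ℝ (Set.extremePoints ℝ F) ⊆ segment ℝ x y := by
        rw [← convexHull_pair]
        exact convexHull_mono hFext
      have hsegclosed : IsClosed (segment ℝ x y) := by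
        rw [← convexHull_pair]
        exact ((Set.finite_singleton y).insert x).isClosed_convexHull ℝ
      exact closure_minimal hsub3 hsegclosed
end

section
/- Let Q ⊆ {0,1}^n, P = conv(Q), and x, y ∈ Q distinct. Define the witness set W(x,y) = { z ∈ Q \ {x,y} : x ∧ y ≤ z ≤ x ∨ y } (coordinate-wise). If |W(x,y)| ≤ 1, then [x,y] is an edge of P. -/
open Finset

/-- The embedding of `{0,1}^n` (as Boolean vectors) into `ℝ^n`. -/
def toR {n : ℕ} (v : Fin n → Bool) : Fin n → ℝ := fun i => if v i then 1 else 0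

lemma toR_inj {n : ℕ} : Function.Injective (toR (n := n)) := by
  intro a b h
  funext i
  have := congrFun h i
  simp only [toR] at this
  cases ha : a i <;> cases hb : b i <;> simp [ha, hb] at this ⊢ <;> norm_num at this

noncomputable def lmap {n : ℕ} (c : Fin n → ℝ) : (Fin n → ℝ) →L[ℝ] ℝ :=
  ∑ i, c i • (ContinuousLinearMap.proj i : (Fin n → ℝ) →L[ℝ] ℝ)

lemma lmap_apply {n : ℕ} (c : Fin n → ℝ) (v : Fin n → ℝ) :
    lmap c v = ∑ i, c i * v i := by
  simp [lmap, ContinuousLinearMap.sum_apply]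

lemma core {n : ℕ} (Q : Finset (Fin n → Bool)) (x y : Fin n → Bool)
    (hx : x ∈ Q) (hy : y ∈ Q) (hxy : x ≠ y) (c : Fin n → ℝ)
    (heq : ∑ i, c i * toR y i = ∑ i, c i * toR x i)
    (hlt : ∀ z ∈ Q, z ≠ x → z ≠ y → ∑ i, c i * toR z i < ∑ i, c i * toR x i) :
    IsExposed ℝ (convexHull ℝ (toR '' (↑Q : Set (Fin n → Bool)))) (segment ℝ (toR x) (toR y)) := by
  classical
  intro _
  refine ⟨lmap c, ?_⟩
  set P := convexHull ℝ (toR '' (↑Q : Set (Fin n → Bool))) with hP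
  have hxP : toR x ∈ P := subset_convexHull ℝ _ ⟨x, hx, rfl⟩
  have hyP : toR y ∈ P := subset_convexHull ℝ _ ⟨y, hy, rfl⟩
  have hub : ∀ q ∈ P, lmap c q ≤ lmap c (toR x) := by
    intro q hq
    have hsub : toR '' (↑Q : Set (Fin n → Bool)) ⊆ {v | lmap c v ≤ lmap c (toR x)} := by
      rintro _ ⟨z, hz, rfl⟩
      simp only [Set.mem_setOf_eq, lmap_apply]
      have hz' : z ∈ Q := hz
      by_cases h1 : z = x
      · subst h1; exact le_rfl
      by_cases h2 : z = y
      · subst h2; exact le_of_eq heq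
      · exact (hlt z hz' h1 h2).le
    exact convexHull_min hsub (convex_halfSpace_le (LinearMap.isLinear (lmap c).toLinearMap) _) hq
  have hlxy : lmap c (toR y) = lmap c (toR x) := by rw [lmap_apply, lmap_apply]; exact heq
  ext p
  constructor
  · rintro ⟨a, b, ha, hb, hab, rfl⟩
    have hpP : a • toR x + b • toR y ∈ P :=
      (convex_convexHull ℝ _) hxP hyP ha hb hab
    refine ⟨hpP, fun q hq => ?_⟩
    have : lmap c (a • toR x + b • toR y) = lmap c (toR x) := by
      rw [map_add, map_smul, map_smul, hlxy, smul_eq_mul, smul_eq_mul, ← add_mul, hab, one_mul]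
    rw [this]; exact hub q hq
  · rintro ⟨hpP, hmax⟩
    have hlp : lmap c p = lmap c (toR x) :=
      le_antisymm (hub p hpP) (hmax (toR x) hxP)
    -- weights
    have himg : toR '' (↑Q : Set (Fin n → Bool)) = ↑(Q.image toR) := by
      rw [Finset.coe_image]
    rw [hP, himg, Finset.convexHull_eq] at hpP
    obtain ⟨w, hw0, hw1, hwc⟩ := hpP
    set s := Q.image toR with hs
    have hxs : toR x ∈ s := Finset.mem_image_of_mem _ hx
    have hys : toR y ∈ s := Finset.mem_image_of_mem _ hy
    have hps : p = ∑ v ∈ s, w v • v := by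
      rw [← hwc, Finset.centerMass_eq_of_sum_1 _ _ hw1]; rfl
    have hlv : ∀ v ∈ s, lmap c v ≤ lmap c (toR x) := fun v hv =>
      hub v (subset_convexHull ℝ _ (by rw [himg] at *; exact hv))
    have hsum0 : ∑ v ∈ s, w v * (lmap c (toR x) - lmap c v) = 0 := by
      have hlpsum : lmap c p = ∑ v ∈ s, w v * lmap c v := by
        rw [hps, map_sum]
        exact Finset.sum_congr rfl fun v _ => by rw [map_smul, smul_eq_mul]
      have : ∑ v ∈ s, w v * (lmap c (toR x) - lmap c v)
          = (∑ v ∈ s, w v) * lmap c (toR x) - ∑ v ∈ s, w v * lmap c v := by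
        rw [Finset.sum_mul, ← Finset.sum_sub_distrib]
        exact Finset.sum_congr rfl fun v _ => by ring
      rw [this, hw1, one_mul, ← hlpsum, hlp, sub_self]
    have hzero : ∀ v ∈ s, v ≠ toR x → v ≠ toR y → w v = 0 := by
      intro v hv hvx hvy
      have h0 := (Finset.sum_eq_zero_iff_of_nonneg
        (fun v hv => mul_nonneg (hw0 v hv) (sub_nonneg.2 (hlv v hv)))).1 hsum0 v hv
      obtain ⟨z, hz, rfl⟩ := Finset.mem_image.1 hv
      have hzx : z ≠ x := fun h => hvx (by rw [h])
      have hzy : z ≠ y := fun h => hvy (by rw [h])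
      have hstrict : lmap c (toR z) < lmap c (toR x) := by
        rw [lmap_apply, lmap_apply]; exact hlt z hz hzx hzy
      rcases mul_eq_zero.1 h0 with h | h
      · exact h
      · exact absurd h (sub_ne_zero.2 (ne_of_gt hstrict).symm.symm)
    have hxyR : toR x ≠ toR y := fun h => hxy (toR_inj h)
    have hpair : ({toR x, toR y} : Finset (Fin n → ℝ)) ⊆ s := by
      intro v hv
      rcases Finset.mem_insert.1 hv with h | h
      · subst h; exact hxs
      · rw [Finset.mem_singleton.1 h]; exact hys
    have hps2 : p = w (toR x) • toR x + w (toR y) • toR y := by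
      rw [hps, ← Finset.sum_subset hpair (fun v hv hnv => ?_), Finset.sum_pair hxyR]
      have hvx : v ≠ toR x := fun h => hnv (by rw [h]; exact Finset.mem_insert_self _ _)
      have hvy : v ≠ toR y := fun h => hnv (by rw [h]; simp)
      rw [hzero v hv hvx hvy, zero_smul]
    have hw1' : w (toR x) + w (toR y) = 1 := by
      rw [← hw1, ← Finset.sum_subset hpair (fun v hv hnv => ?_), Finset.sum_pair hxyR]
      have hvx : v ≠ toR x := fun h => hnv (by rw [h]; exact Finset.mem_insert_self _ _)
      have hvy : v ≠ toR y := fun h => hnv (by rw [h]; simp)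
      exact hzero v hv hvx hvy
    exact ⟨w (toR x), w (toR y), hw0 _ hxs, hw0 _ hys, hw1', hps2.symm⟩

-- generic per-term bound
lemma term_bound {n : ℕ} (c : Fin n → ℝ) (z : Fin n → Bool) (i : Fin n) :
    c i * toR z i ≤ max 0 (c i) := by
  simp only [toR]
  cases hz : z i <;> simp [le_max_left, le_max_right]

-- term at an "equal" coordinate, vector agreeing with x
lemma eq_term {n : ℕ} (c : Fin n → ℝ) (x z : Fin n → Bool) (j : Fin n)
    (hc : c j = if x j then 2 else -2) (hz : z j = x j) :
    c j * toR z j = max 0 (c j) := by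
  simp only [toR, hc, hz]
  cases hxj : x j <;> norm_num

-- term at a violated "equal" coordinate
lemma viol_term {n : ℕ} (c : Fin n → ℝ) (x z : Fin n → Bool) (j : Fin n)
    (hc : c j = if x j then 2 else -2) (hz : z j ≠ x j) :
    max 0 (c j) - c j * toR z j = 2 := by
  simp only [toR, hc]
  cases hxj : x j <;> cases hzj : z j <;> simp [hxj, hzj] at hz ⊢ <;> norm_num

-- extraction of a violating coordinate
lemma viol_coord {n : ℕ} (x y z : Fin n → Bool)
    (h : ∃ i, ¬((x i && y i) ≤ z i ∧ z i ≤ (x i || y i))) :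
    ∃ j, x j = y j ∧ z j ≠ x j := by
  obtain ⟨i, hi⟩ := h
  refine ⟨i, ?_⟩
  cases hxi : x i <;> cases hyi : y i <;> cases hzi : z i <;>
    simp [hxi, hyi, hzi] at hi ⊢

def cA {n : ℕ} (x y : Fin n → Bool) : Fin n → ℝ :=
  fun i => if x i = y i then (if x i then 2 else -2) else 0

lemma cA_x {n : ℕ} (x y : Fin n → Bool) (i : Fin n) :
    cA x y i * toR x i = max 0 (cA x y i) := by
  by_cases h : x i = y i
  · exact eq_term _ _ _ _ (by simp [cA, h]) rfl
  · simp [cA, h]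

lemma cA_y {n : ℕ} (x y : Fin n → Bool) (i : Fin n) :
    cA x y i * toR y i = max 0 (cA x y i) := by
  by_cases h : x i = y i
  · exact eq_term _ _ _ _ (by simp [cA, h]) h.symm
  · simp [cA, h]

lemma sum_lt_of_viol {n : ℕ} (c : Fin n → ℝ) (z : Fin n → Bool) (j : Fin n)
    (hj : max 0 (c j) - c j * toR z j = 2) :
    ∑ i, c i * toR z i ≤ (∑ i, max 0 (c i)) - 2 := by
  have h2 : (2:ℝ) ≤ ∑ i, (max 0 (c i) - c i * toR z i) := by
    rw [← hj]
    exact Finset.single_le_sum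
      (fun i _ => sub_nonneg.2 (term_bound c z i)) (Finset.mem_univ j)
  rw [Finset.sum_sub_distrib] at h2
  linarith

def cB {n : ℕ} (x y : Fin n → Bool) (i0 i1 : Fin n) : Fin n → ℝ :=
  fun i => if x i = y i then (if x i then 2 else -2) else
    if i = i0 then (if x i then 1 else -1) else
    if i = i1 then (if x i then -1 else 1) else 0

section CB
variable {n : ℕ} (x y : Fin n → Bool) (i0 i1 : Fin n)

lemma cB_x_ne (h01 : i0 ≠ i1) (i : Fin n) (hi : i ≠ i1) :
    cB x y i0 i1 i * toR x i = max 0 (cB x y i0 i1 i) := by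
  by_cases h : x i = y i
  · exact eq_term _ _ _ _ (by simp [cB, h]) rfl
  · by_cases h0 : i = i0
    · simp only [cB, if_neg h, if_pos h0, toR]
      cases hxi : x i <;> norm_num
    · simp [cB, h, h0, hi]

lemma cB_x_i1 (hi1 : ¬ x i1 = y i1) (h01 : i0 ≠ i1) :
    max 0 (cB x y i0 i1 i1) - cB x y i0 i1 i1 * toR x i1 = 1 := by
  simp only [cB, if_neg hi1, if_neg (Ne.symm h01), if_pos rfl, toR]
  cases hxi : x i1 <;> norm_num

lemma cB_y_ne (i : Fin n) (hi : i ≠ i0) :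
    cB x y i0 i1 i * toR y i = max 0 (cB x y i0 i1 i) := by
  by_cases h : x i = y i
  · exact eq_term _ _ _ _ (by simp [cB, h]) h.symm
  · by_cases h1 : i = i1
    · simp only [cB, if_neg h, if_neg hi, if_pos h1, toR]
      cases hxi : x i <;> cases hyi : y i <;> simp_all <;> norm_num
    · simp [cB, h, hi, h1]

lemma cB_y_i0 (hi0 : ¬ x i0 = y i0) :
    max 0 (cB x y i0 i1 i0) - cB x y i0 i1 i0 * toR y i0 = 1 := by
  simp only [cB, if_neg hi0, if_pos rfl, toR]
  cases hxi : x i0 <;> cases hyi : y i0 <;> simp_all <;> norm_num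

lemma cB_fx (hi1 : ¬ x i1 = y i1) (h01 : i0 ≠ i1) :
    ∑ i, cB x y i0 i1 i * toR x i = (∑ i, max 0 (cB x y i0 i1 i)) - 1 := by
  have h : ∑ i, (max 0 (cB x y i0 i1 i) - cB x y i0 i1 i * toR x i) = 1 := by
    rw [Finset.sum_eq_single_of_mem i1 (Finset.mem_univ i1)
      (fun b _ hb => by rw [cB_x_ne x y i0 i1 h01 b hb, sub_self])]
    exact cB_x_i1 x y i0 i1 hi1 h01
  rw [Finset.sum_sub_distrib] at h
  linarith

lemma cB_fy (hi0 : ¬ x i0 = y i0) :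
    ∑ i, cB x y i0 i1 i * toR y i = (∑ i, max 0 (cB x y i0 i1 i)) - 1 := by
  have h : ∑ i, (max 0 (cB x y i0 i1 i) - cB x y i0 i1 i * toR y i) = 1 := by
    rw [Finset.sum_eq_single_of_mem i0 (Finset.mem_univ i0)
      (fun b _ hb => by rw [cB_y_ne x y i0 i1 b hb, sub_self])]
    exact cB_y_i0 x y i0 i1 hi0
  rw [Finset.sum_sub_distrib] at h
  linarith

lemma cB_fw (w : Fin n → Bool) (h01 : i0 ≠ i1)
    (hi0 : ¬ x i0 = y i0) (hi1 : ¬ x i1 = y i1)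
    (hw0 : w i0 = y i0) (hw1 : w i1 = x i1)
    (hbox : ∀ i, x i = y i → w i = x i) :
    ∑ i, cB x y i0 i1 i * toR w i = (∑ i, max 0 (cB x y i0 i1 i)) - 2 := by
  have h : ∑ i, (max 0 (cB x y i0 i1 i) - cB x y i0 i1 i * toR w i) = 2 := by
    have hsub : ({i0, i1} : Finset (Fin n)) ⊆ Finset.univ := Finset.subset_univ _
    rw [← Finset.sum_subset hsub (fun i _ hni => ?_), Finset.sum_pair h01]
    · have e0 : max 0 (cB x y i0 i1 i0) - cB x y i0 i1 i0 * toR w i0 = 1 := by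
        have : toR w i0 = toR y i0 := by rw [toR, toR, hw0]
        rw [this]; exact cB_y_i0 x y i0 i1 hi0
      have e1 : max 0 (cB x y i0 i1 i1) - cB x y i0 i1 i1 * toR w i1 = 1 := by
        have : toR w i1 = toR x i1 := by rw [toR, toR, hw1]
        rw [this]; exact cB_x_i1 x y i0 i1 hi1 h01
      rw [e0, e1]; norm_num
    · have hni0 : i ≠ i0 := fun h => hni (by rw [h]; exact Finset.mem_insert_self _ _)
      have hni1 : i ≠ i1 := fun h => hni (by rw [h]; simp)
      by_cases h : x i = y i
      · rw [eq_term _ _ _ _ (by simp [cB, h]) (hbox i h), sub_self]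
      · simp [cB, h, hni0, hni1]
  rw [Finset.sum_sub_distrib] at h
  linarith

end CB


/-- If the witness set `W(x,y) = {z ∈ Q \ {x,y} : x ∧ y ≤ z ≤ x ∨ y}` has at most one
element, then `[x,y]` is an edge of `P = conv(Q)`. -/
theorem stmt4 {n : ℕ} (Q : Finset (Fin n → Bool)) (x y : Fin n → Bool)
    (hx : x ∈ Q) (hy : y ∈ Q) (hxy : x ≠ y)
    (hW : (Q.filter (fun z =>
        z ≠ x ∧ z ≠ y ∧ ∀ i, (x i && y i) ≤ z i ∧ z i ≤ (x i || y i))).card ≤ 1) :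
    IsEdgeOf (convexHull ℝ (toR '' (↑Q : Set (Fin n → Bool)))) (toR x) (toR y) := by
  unfold IsEdgeOf
  classical
  by_cases hWe : (Q.filter (fun z =>
      z ≠ x ∧ z ≠ y ∧ ∀ i, (x i && y i) ≤ z i ∧ z i ≤ (x i || y i))) = ∅
  · -- no witness: use cA
    apply core Q x y hx hy hxy (cA x y)
    · exact Finset.sum_congr rfl fun i _ => by rw [cA_x, cA_y]
    · intro z hz hzx hzy
      have hnm : z ∉ (Q.filter (fun z =>
          z ≠ x ∧ z ≠ y ∧ ∀ i, (x i && y i) ≤ z i ∧ z i ≤ (x i || y i))) := by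
        rw [hWe]; exact Finset.notMem_empty z
      have hex : ∃ i, ¬((x i && y i) ≤ z i ∧ z i ≤ (x i || y i)) := by
        by_contra h
        push_neg at h
        exact hnm (Finset.mem_filter.2 ⟨hz, hzx, hzy, fun i => h i⟩)
      obtain ⟨j, hj1, hj2⟩ := viol_coord x y z hex
      have hvz := sum_lt_of_viol (cA x y) z j (viol_term _ x z j (by simp [cA, hj1]) hj2)
      have hfx : ∑ i, cA x y i * toR x i = ∑ i, max 0 (cA x y i) :=
        Finset.sum_congr rfl fun i _ => cA_x x y i
      linarith
  · -- one witness w: use cB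
    obtain ⟨w, hwf⟩ := Finset.nonempty_iff_ne_empty.2 hWe
    have hwmem := Finset.mem_filter.1 hwf
    obtain ⟨hwQ, hwx, hwy, hbox⟩ := hwmem
    obtain ⟨i0, h0⟩ := Function.ne_iff.1 hwx
    obtain ⟨i1, h1⟩ := Function.ne_iff.1 hwy
    have H0 : ¬ x i0 = y i0 ∧ w i0 = y i0 := by
      have hb := hbox i0
      cases hxi : x i0 <;> cases hyi : y i0 <;> cases hwi : w i0 <;> simp_all [Bool.le_iff_imp]
    have H1 : ¬ x i1 = y i1 ∧ w i1 = x i1 := by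
      have hb := hbox i1
      cases hxi : x i1 <;> cases hyi : y i1 <;> cases hwi : w i1 <;> simp_all [Bool.le_iff_imp]
    have h01 : i0 ≠ i1 := by
      intro h
      rw [← h] at H1
      exact h0 H1.2
    have hboxeq : ∀ i, x i = y i → w i = x i := by
      intro i he
      have hb := hbox i
      revert hb he
      cases hxi : x i <;> cases hyi : y i <;> cases hwi : w i <;> decide
    apply core Q x y hx hy hxy (cB x y i0 i1)
    · rw [cB_fy x y i0 i1 H0.1, cB_fx x y i0 i1 H1.1 h01]
    · intro z hz hzx hzy
      have hfx := cB_fx x y i0 i1 H1.1 h01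
      by_cases hzw : z = w
      · rw [hzw, hfx, cB_fw x y i0 i1 w h01 H0.1 H1.1 H0.2 H1.2 hboxeq]
        norm_num
      · have hnm : z ∉ (Q.filter (fun z =>
            z ≠ x ∧ z ≠ y ∧ ∀ i, (x i && y i) ≤ z i ∧ z i ≤ (x i || y i))) :=
          fun hmem => hzw (Finset.card_le_one.1 hW z hmem w hwf)
        have hex : ∃ i, ¬((x i && y i) ≤ z i ∧ z i ≤ (x i || y i)) := by
          by_contra h
          push_neg at h
          exact hnm (Finset.mem_filter.2 ⟨hz, hzx, hzy, fun i => h i⟩)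
        obtain ⟨j, hj1, hj2⟩ := viol_coord x y z hex
        have hvz := sum_lt_of_viol (cB x y i0 i1) z j
          (viol_term _ x z j (by simp [cB, hj1]) hj2)
        linarith
end

section
/- Let Q ⊆ {0,1}^n and P = conv(Q). If for every pair of distinct x, y ∈ Q the witness set W(x,y) = { z ∈ Q \ {x,y} : x ∧ y ≤ z ≤ x ∨ y } has at most one element, then the graph of P is a clique, i.e., every pair of distinct vertices of P forms an edge of P. -/
open Finset

/-- If a linear functional attains its maximum over the finite set `T` exactly at the two
points `x ≠ y`, then the segment `[x,y]` is an exposed face of `conv T`. -/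
lemma exposed_of_argmax_pair {n : ℕ} (T : Finset (Fin n → ℝ)) {x y : Fin n → ℝ}
    (hx : x ∈ T) (hy : y ∈ T) (hxy : x ≠ y) (c : Fin n → ℝ)
    (heq : ∑ i, c i * y i = ∑ i, c i * x i)
    (hlt : ∀ z ∈ T, z ≠ x → z ≠ y → ∑ i, c i * z i < ∑ i, c i * x i) :
    IsExposed ℝ (convexHull ℝ ↑T) (segment ℝ x y) := by
  intro _
  set l : (Fin n → ℝ) →L[ℝ] ℝ :=
    ∑ i, c i • (ContinuousLinearMap.proj (R := ℝ) (φ := fun _ : Fin n => ℝ) i) with hl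
  have hlapp : ∀ v : Fin n → ℝ, l v = ∑ i, c i * v i := by
    intro v
    simp [hl, ContinuousLinearMap.sum_apply, ContinuousLinearMap.smul_apply, smul_eq_mul]
  have hub : ∀ z ∈ T, l z ≤ l x := by
    intro z hz
    by_cases h1 : z = x
    · rw [h1]
    by_cases h2 : z = y
    · rw [h2, hlapp, hlapp]; exact le_of_eq heq
    · rw [hlapp, hlapp]; exact le_of_lt (hlt z hz h1 h2)
  have hP : ∀ p ∈ convexHull ℝ (↑T : Set (Fin n → ℝ)), l p ≤ l x := by
    intro p hp
    have hconv : Convex ℝ {q : Fin n → ℝ | l q ≤ l x} :=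
      convex_halfSpace_le ⟨fun a b => l.map_add a b, fun r a => l.map_smul r a⟩ (l x)
    exact convexHull_min (fun z hz => hub z (Finset.mem_coe.1 hz)) hconv hp
  have hxC : x ∈ convexHull ℝ (↑T : Set (Fin n → ℝ)) :=
    subset_convexHull ℝ _ (Finset.mem_coe.2 hx)
  have hyC : y ∈ convexHull ℝ (↑T : Set (Fin n → ℝ)) :=
    subset_convexHull ℝ _ (Finset.mem_coe.2 hy)
  refine ⟨l, ?_⟩
  ext p
  constructor
  · rintro hp
    obtain ⟨a, b, ha, hb, hab, rfl⟩ := hp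
    have hpC : a • x + b • y ∈ convexHull ℝ (↑T : Set (Fin n → ℝ)) :=
      segment_subset_convexHull (Finset.mem_coe.2 hx) (Finset.mem_coe.2 hy) ⟨a, b, ha, hb, hab, rfl⟩
    refine ⟨hpC, fun q hq => ?_⟩
    have hval : l (a • x + b • y) = l x := by
      have : l y = l x := by rw [hlapp, hlapp]; exact heq
      rw [map_add, l.map_smul, l.map_smul, this, smul_eq_mul, smul_eq_mul, ← add_mul, hab, one_mul]
    rw [hval]
    exact hP q hq
  · rintro ⟨hpA, hpmax⟩
    have hpe : l p = l x := le_antisymm (hP p hpA) (hpmax x hxC)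
    rw [show (↑T : Set (Fin n → ℝ)) = ↑T from rfl, Finset.convexHull_eq] at hpA
    obtain ⟨wt, hw0, hw1, hwc⟩ := hpA
    rw [Finset.centerMass_eq_of_sum_1 _ _ hw1] at hwc
    simp only [id] at hwc
    have hlsum : ∑ z ∈ T, wt z * l z = ∑ z ∈ T, wt z * l x := by
      have h1 : l p = ∑ z ∈ T, wt z * l z := by
        rw [← hwc, map_sum]
        exact Finset.sum_congr rfl fun z _ => by rw [l.map_smul, smul_eq_mul]
      have h2 : ∑ z ∈ T, wt z * l x = l x := by
        rw [← Finset.sum_mul, hw1, one_mul]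
      rw [← h1, h2, hpe]
    have heach : ∀ z ∈ T, wt z * l z = wt z * l x :=
      (Finset.sum_eq_sum_iff_of_le fun z hz =>
        mul_le_mul_of_nonneg_left (hub z hz) (hw0 z hz)).1 hlsum
    have hzero : ∀ z ∈ T, z ≠ x → z ≠ y → wt z = 0 := by
      intro z hz h1 h2
      by_contra h
      have hpos : 0 < wt z := lt_of_le_of_ne (hw0 z hz) (Ne.symm h)
      have hlz : l z < l x := by
        rw [hlapp, hlapp]; exact hlt z hz h1 h2
      have := heach z hz
      nlinarith
    have hsub : ({x, y} : Finset (Fin n → ℝ)) ⊆ T := by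
      intro z hz
      rcases Finset.mem_insert.1 hz with h | h
      · rw [h]; exact hx
      · rw [Finset.mem_singleton.1 h]; exact hy
    have hnotin : ∀ z ∈ T, z ∉ ({x, y} : Finset (Fin n → ℝ)) → z ≠ x ∧ z ≠ y := by
      intro z _ hz
      constructor <;> intro h <;> apply hz <;> rw [h] <;> simp
    have hs1 : wt x + wt y = 1 := by
      rw [← Finset.sum_pair hxy, Finset.sum_subset hsub
        (fun z hz hnz => hzero z hz (hnotin z hz hnz).1 (hnotin z hz hnz).2), hw1]
    have hs2 : wt x • x + wt y • y = p := by
      rw [← Finset.sum_pair (f := fun z => wt z • z) hxy,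
        Finset.sum_subset hsub (fun z hz hnz => by
          rw [hzero z hz (hnotin z hz hnz).1 (hnotin z hz hnz).2, zero_smul]), hwc]
    exact ⟨wt x, wt y, hw0 x hx, hw0 y hy, hs1, hs2⟩

/-- The key combinatorial construction: a linear functional whose maximum over `Q` is
attained exactly at `x` and `y`. -/
lemma key {n : ℕ} (Q : Finset (Fin n → Bool))
    (hW : ∀ x ∈ Q, ∀ y ∈ Q, x ≠ y →
      (Q.filter (fun z =>
        z ≠ x ∧ z ≠ y ∧ ∀ i, (x i && y i) ≤ z i ∧ z i ≤ (x i || y i))).card ≤ 1)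
    {x y : Fin n → Bool} (hx : x ∈ Q) (hy : y ∈ Q) (hxy : x ≠ y) :
    ∃ c : Fin n → ℝ,
      (∑ i, c i * toR y i) = (∑ i, c i * toR x i) ∧
      ∀ z ∈ Q, z ≠ x → z ≠ y → (∑ i, c i * toR z i) < (∑ i, c i * toR x i) := by
  classical
  set W := Q.filter (fun z =>
    z ≠ x ∧ z ≠ y ∧ ∀ i, (x i && y i) ≤ z i ∧ z i ≤ (x i || y i)) with hWdef
  have hWcard : W.card ≤ 1 := hW x hx y hy hxy
  have hboxmem : ∀ z ∈ Q, z ≠ x → z ≠ y → (∀ i, x i = y i → z i = x i) → z ∈ W := by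
    intro z hz h1 h2 hb
    rw [hWdef, Finset.mem_filter]
    refine ⟨hz, h1, h2, fun i => ?_⟩
    by_cases h : x i = y i
    · rw [hb i h, ← h]
      cases x i <;> simp
    · constructor
      · rw [show (x i && y i) = false by cases hxi : x i <;> cases hyi : y i <;> simp_all]
        exact Bool.false_le _
      · rw [show (x i || y i) = true by cases hxi : x i <;> cases hyi : y i <;> simp_all]
        exact Bool.le_true _
  by_cases hWe : W = ∅
  · -- no witness: use only the agreement coordinates
    refine ⟨fun i => if x i = y i then (if x i then (5:ℝ) else -5) else 0, ?_, ?_⟩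
    · refine Finset.sum_congr rfl fun i _ => ?_
      by_cases h : x i = y i
      · simp [toR, h]
      · simp [h]
    · intro z hz h1 h2
      have hbox : ¬ ∀ i, x i = y i → z i = x i := by
        intro hb
        have := hboxmem z hz h1 h2 hb
        rw [hWe] at this
        exact absurd this (Finset.notMem_empty z)
      push_neg at hbox
      obtain ⟨k, hk, hzk⟩ := hbox
      rw [← sub_pos, ← Finset.sum_sub_distrib]
      apply Finset.sum_pos'
      · intro i _
        by_cases h : x i = y i
        · cases hxi : x i <;> cases hzi : z i <;> simp [toR, ← h, hxi, hzi] <;> norm_num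
        · simp [h]
      · refine ⟨k, Finset.mem_univ k, ?_⟩
        cases hxk : x k <;> cases hzkv : z k <;> simp [toR, ← hk, hxk, hzkv] at hzk ⊢ <;> norm_num
  · -- there is a (unique) witness w
    obtain ⟨w, hwmem⟩ := Finset.nonempty_of_ne_empty hWe
    have hwfacts := Finset.mem_filter.1 hwmem
    obtain ⟨hwQ, hwx, hwy, hwbox⟩ := hwfacts
    have hwagree : ∀ i, x i = y i → w i = x i := by
      intro i h
      cases hxi : x i
      · have hb2 := (hwbox i).2
        rw [← h, hxi] at hb2
        cases hwv : w i
        · rfl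
        · rw [hwv] at hb2; exact absurd hb2 (by decide)
      · have hb1 := (hwbox i).1
        rw [← h, hxi] at hb1
        cases hwv : w i
        · rw [hwv] at hb1; exact absurd hb1 (by decide)
        · rfl
    have huniq : ∀ z ∈ W, z = w := by
      intro z hz
      exact Finset.card_le_one.1 hWcard z hz w hwmem
    -- a coordinate where w differs from x
    have hex : ∃ i, w i ≠ x i := by
      by_contra h
      push_neg at h
      exact hwx (funext h)
    obtain ⟨i₀, hi₀⟩ := hex
    have hxyi₀ : x i₀ ≠ y i₀ := fun h => hi₀ (hwagree i₀ h)
    have hwi₀ : w i₀ = y i₀ :=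
      (Bool.eq_not_of_ne hi₀).trans (Bool.eq_not_of_ne (Ne.symm hxyi₀)).symm
    -- a coordinate where w differs from y
    have hex' : ∃ j, w j ≠ y j := by
      by_contra h
      push_neg at h
      exact hwy (funext h)
    obtain ⟨j₀, hj₀⟩ := hex'
    have hxyj₀ : x j₀ ≠ y j₀ := by
      intro h
      exact hj₀ ((hwagree j₀ h).trans h)
    have hwj₀ : w j₀ = x j₀ :=
      (Bool.eq_not_of_ne hj₀).trans (Bool.eq_not_of_ne hxyj₀).symm
    have hij : i₀ ≠ j₀ := by
      intro h
      rw [h] at hwi₀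
      exact hj₀ hwi₀
    set c : Fin n → ℝ := fun i => if x i = y i then (if x i then (5:ℝ) else -5)
      else if i = i₀ then (toR x i₀ - toR y i₀) else if i = j₀ then (toR y j₀ - toR x j₀) else 0
      with hcdef
    have hci₀ : c i₀ = toR x i₀ - toR y i₀ := by simp [hcdef, hxyi₀]
    have hcj₀ : c j₀ = toR y j₀ - toR x j₀ := by
      simp [hcdef, hxyj₀, Ne.symm hij]
    have hc0 : ∀ i, x i ≠ y i → i ≠ i₀ → i ≠ j₀ → c i = 0 := by
      intro i h h1 h2
      simp [hcdef, h, h1, h2]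
    have hsq : (toR x i₀ - toR y i₀) * (toR x i₀ - toR y i₀) = 1 := by
      cases hxi : x i₀ <;> cases hyi : y i₀ <;> simp [toR, hxi, hyi] at hxyi₀ ⊢ <;> norm_num
    have hsqj : (toR x j₀ - toR y j₀) * (toR x j₀ - toR y j₀) = 1 := by
      cases hxj : x j₀ <;> cases hyj : y j₀ <;> simp [toR, hxj, hyj] at hxyj₀ ⊢ <;> norm_num
    refine ⟨c, ?_, ?_⟩
    · -- ∑ c·toR y = ∑ c·toR x
      have hgoal : ∑ i, (c i * toR x i - c i * toR y i) = 0 := by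
        have hvanish : ∀ i ∈ Finset.univ, i ∉ ({i₀, j₀} : Finset (Fin n)) →
            c i * toR x i - c i * toR y i = 0 := by
          intro i _ hi
          have h1 : i ≠ i₀ := fun h => hi (by rw [h]; simp)
          have h2 : i ≠ j₀ := fun h => hi (by rw [h]; simp)
          by_cases h : x i = y i
          · simp [toR, h]
          · rw [hc0 i h h1 h2]; ring
        rw [← Finset.sum_subset (Finset.subset_univ ({i₀, j₀} : Finset (Fin n))) hvanish,
          Finset.sum_pair hij, hci₀, hcj₀]
        linear_combination hsq - hsqj
      rw [Finset.sum_sub_distrib] at hgoal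
      linarith
    · intro z hz h1 h2
      rw [← sub_pos, ← Finset.sum_sub_distrib]
      have hagree_nonneg : ∀ i, x i = y i →
          0 ≤ c i * toR x i - c i * toR z i := by
        intro i h
        cases hxi : x i <;> cases hzi : z i <;>
          simp [hcdef, toR, ← h, hxi, hzi] <;> norm_num
      by_cases hbox : ∀ i, x i = y i → z i = x i
      · -- z is a witness, so z = w
        have hzw : z = w := huniq z (hboxmem z hz h1 h2 hbox)
        subst hzw
        have hvanish : ∀ i ∈ Finset.univ, i ∉ ({i₀, j₀} : Finset (Fin n)) →
            c i * toR x i - c i * toR z i = 0 := by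
          intro i _ hi
          have hi1 : i ≠ i₀ := fun h => hi (by rw [h]; simp)
          have hi2 : i ≠ j₀ := fun h => hi (by rw [h]; simp)
          by_cases h : x i = y i
          · simp only [toR, hwagree i h]; ring
          · rw [hc0 i h hi1 hi2]; ring
        rw [← Finset.sum_subset (Finset.subset_univ ({i₀, j₀} : Finset (Fin n))) hvanish,
          Finset.sum_pair hij, hci₀, hcj₀]
        have e1 : toR z i₀ = toR y i₀ := by simp only [toR, hwi₀]
        have e2 : toR z j₀ = toR x j₀ := by simp only [toR, hwj₀]
        rw [e1, e2]
        nlinarith [hsq]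
      · push_neg at hbox
        obtain ⟨k, hk, hzk⟩ := hbox
        have hki : k ≠ i₀ := fun h => hxyi₀ (h ▸ hk)
        have hkj : k ≠ j₀ := fun h => hxyj₀ (h ▸ hk)
        have hdk : (5:ℝ) ≤ c k * toR x k - c k * toR z k := by
          cases hxk : x k <;> cases hzkv : z k <;>
            simp [hcdef, toR, ← hk, hxk, hzkv] at hzk ⊢ <;> norm_num
        have hrest : ∀ i ∈ Finset.univ.erase k,
            (if i = i₀ ∨ i = j₀ then (-1:ℝ) else 0) ≤ c i * toR x i - c i * toR z i := by
          intro i _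
          by_cases hii : i = i₀
          · subst hii
            rw [hci₀, if_pos (Or.inl rfl)]
            have hx01 : toR x i ≤ 1 ∧ 0 ≤ toR x i := by
              constructor <;> (rw [toR]; split <;> norm_num)
            have hy01 : toR y i ≤ 1 ∧ 0 ≤ toR y i := by
              constructor <;> (rw [toR]; split <;> norm_num)
            have hz01 : toR z i ≤ 1 ∧ 0 ≤ toR z i := by
              constructor <;> (rw [toR]; split <;> norm_num)
            nlinarith [hx01.1, hx01.2, hy01.1, hy01.2, hz01.1, hz01.2]
          by_cases hij' : i = j₀
          · subst hij'
            rw [hcj₀, if_pos (Or.inr rfl)]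
            have hx01 : toR x i ≤ 1 ∧ 0 ≤ toR x i := by
              constructor <;> (rw [toR]; split <;> norm_num)
            have hy01 : toR y i ≤ 1 ∧ 0 ≤ toR y i := by
              constructor <;> (rw [toR]; split <;> norm_num)
            have hz01 : toR z i ≤ 1 ∧ 0 ≤ toR z i := by
              constructor <;> (rw [toR]; split <;> norm_num)
            nlinarith [hx01.1, hx01.2, hy01.1, hy01.2, hz01.1, hz01.2]
          · rw [if_neg (by tauto)]
            by_cases h : x i = y i
            · exact hagree_nonneg i h
            · rw [hc0 i h hii hij']; simp
        have hsum_lb : ∑ i ∈ Finset.univ.erase k, (if i = i₀ ∨ i = j₀ then (-1:ℝ) else 0)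
            = -2 := by
          have hsubp : ({i₀, j₀} : Finset (Fin n)) ⊆ Finset.univ.erase k := by
            intro i hi
            rcases Finset.mem_insert.1 hi with h | h
            · subst h; exact Finset.mem_erase.2 ⟨Ne.symm hki, Finset.mem_univ _⟩
            · rw [Finset.mem_singleton.1 h]
              exact Finset.mem_erase.2 ⟨Ne.symm hkj, Finset.mem_univ _⟩
          rw [← Finset.sum_subset hsubp (fun i _ hi => by
            have h1 : i ≠ i₀ := fun h => hi (by rw [h]; simp)
            have h2 : i ≠ j₀ := fun h => hi (by rw [h]; simp)
            rw [if_neg (by tauto)]), Finset.sum_pair hij]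
          norm_num
        have hErest : (-2:ℝ) ≤ ∑ i ∈ Finset.univ.erase k, (c i * toR x i - c i * toR z i) := by
          calc (-2:ℝ) = ∑ i ∈ Finset.univ.erase k,
              (if i = i₀ ∨ i = j₀ then (-1:ℝ) else 0) := hsum_lb.symm
            _ ≤ _ := Finset.sum_le_sum hrest
        have hsplit : (c k * toR x k - c k * toR z k) +
            ∑ i ∈ Finset.univ.erase k, (c i * toR x i - c i * toR z i)
            = ∑ i, (c i * toR x i - c i * toR z i) := by
          exact Finset.add_sum_erase Finset.univ
            (fun i => c i * toR x i - c i * toR z i) (Finset.mem_univ k)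
        linarith

/-- If all witness sets `W(x,y)` for distinct `x, y ∈ Q ⊆ {0,1}^n` have at most one
element, then the graph of `P = conv(Q)` is a clique: every pair of distinct vertices
of `P` forms an edge of `P`. -/
theorem stmt5 {n : ℕ} (Q : Finset (Fin n → Bool))
    (hW : ∀ x ∈ Q, ∀ y ∈ Q, x ≠ y →
      (Q.filter (fun z =>
        z ≠ x ∧ z ≠ y ∧ ∀ i, (x i && y i) ≤ z i ∧ z i ≤ (x i || y i))).card ≤ 1) :
    ∀ u ∈ Set.extremePoints ℝ (convexHull ℝ (toR '' (↑Q : Set (Fin n → Bool)))),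
      ∀ v ∈ Set.extremePoints ℝ (convexHull ℝ (toR '' (↑Q : Set (Fin n → Bool)))),
        u ≠ v →
          IsEdgeOf (convexHull ℝ (toR '' (↑Q : Set (Fin n → Bool)))) u v := by
  intro u hu v hv huv
  have hsub := extremePoints_convexHull_subset (𝕜 := ℝ) (A := toR '' (↑Q : Set (Fin n → Bool)))
  obtain ⟨x, hxQ, rfl⟩ := hsub hu
  obtain ⟨y, hyQ, rfl⟩ := hsub hv
  have hxy : x ≠ y := fun h => huv (by rw [h])
  obtain ⟨c, heq, hlt⟩ := key Q hW (Finset.mem_coe.1 hxQ) (Finset.mem_coe.1 hyQ) hxy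
  have himg : (↑(Q.image toR) : Set (Fin n → ℝ)) = toR '' (↑Q : Set (Fin n → Bool)) :=
    Finset.coe_image
  rw [IsEdgeOf, ← himg]
  refine exposed_of_argmax_pair (Q.image toR)
    (Finset.mem_image_of_mem _ (Finset.mem_coe.1 hxQ))
    (Finset.mem_image_of_mem _ (Finset.mem_coe.1 hyQ))
    (fun h => hxy (toR_inj h)) c heq ?_
  intro z hz h1 h2
  obtain ⟨z₀, hz₀, rfl⟩ := Finset.mem_image.1 hz
  exact hlt z₀ hz₀ (fun h => h1 (by rw [h])) (fun h => h2 (by rw [h]))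
end

section
/- Let x, y ∈ {0,1}^n differ on exactly d coordinates, let k ≥ 1, and fix u ∈ {0,1}^n with x ∧ y ≤ u ≤ x ∨ y. Then the number of tuples (z_1, ..., z_{2k−1}) ∈ ({0,1}^n)^{2k−1} with (x+y)/2 = (1/(2k))(u + Σ_{i=1}^{2k−1} z_i) is exactly C(2k−1, k)^d. -/
open Finset

lemma card_sum_eq (m s : ℕ) :
    Nat.card {v : Fin m → Bool // (∑ j, if v j then 1 else 0) = s} = m.choose s := by
  rw [Nat.card_eq_fintype_card]
  have e : {v : Fin m → Bool // (∑ j, if v j then 1 else 0) = s} ≃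
      {t : Finset (Fin m) // t.card = s} :=
    { toFun := fun v => ⟨univ.filter (fun j => v.1 j), by
        rw [Finset.card_filter]; exact v.2⟩
      invFun := fun t => ⟨fun j => decide (j ∈ t.1), by
        simpa [Finset.card_filter] using t.2⟩
      left_inv := fun v => by ext j; simp
      right_inv := fun t => by ext j; simp }
  rw [Fintype.card_congr e, Fintype.card_finset_len, Fintype.card_fin]

/-- If `x, y ∈ {0,1}^n` differ on exactly `d` coordinates, `k ≥ 1` and
`x ∧ y ≤ u ≤ x ∨ y`, then the number of tuples `(z_1, …, z_{2k−1})` with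
`(x+y)/2 = (1/(2k))(u + Σ z_i)` is exactly `C(2k−1,k)^d`. -/
theorem stmt12 {n : ℕ} (x y : Fin n → Bool) (d : ℕ) (hd : hammingDist x y = d)
    (k : ℕ) (hk : 1 ≤ k) (u : Fin n → Bool)
    (hu : ∀ i, (x i && y i) ≤ u i ∧ u i ≤ (x i || y i)) :
    Nat.card {z : Fin (2 * k - 1) → Fin n → Bool //
        ∀ i, (toR x i + toR y i) / 2 =
          (1 / (2 * k : ℝ)) * (toR u i + ∑ j, toR (z j) i)} =
      (Nat.choose (2 * k - 1) k) ^ d := by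
  classical
  have h2k : (2 * k : ℝ) ≠ 0 := by positivity
  set C := Nat.choose (2 * k - 1) k with hC
  have e : {z : Fin (2 * k - 1) → Fin n → Bool //
        ∀ i, (toR x i + toR y i) / 2 =
          (1 / (2 * k : ℝ)) * (toR u i + ∑ j, toR (z j) i)} ≃
      (∀ i : Fin n, {v : Fin (2 * k - 1) → Bool //
        (toR x i + toR y i) / 2 =
          (1 / (2 * k : ℝ)) * (toR u i + ∑ j, if v j then (1:ℝ) else 0)}) :=
    { toFun := fun z i => ⟨fun j => z.1 j i, z.2 i⟩
      invFun := fun f => ⟨fun j i => (f i).1 j, fun i => (f i).2⟩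
      left_inv := fun z => rfl
      right_inv := fun f => rfl }
  rw [Nat.card_congr e, Nat.card_pi]
  have key : ∀ i, Nat.card {v : Fin (2 * k - 1) → Bool //
        (toR x i + toR y i) / 2 =
          (1 / (2 * k : ℝ)) * (toR u i + ∑ j, if v j then (1:ℝ) else 0)} =
      if x i ≠ y i then C else 1 := by
    intro i
    have hiff : ∀ v : Fin (2 * k - 1) → Bool,
        ((toR x i + toR y i) / 2 =
          (1 / (2 * k : ℝ)) * (toR u i + ∑ j, if v j then (1:ℝ) else 0)) ↔
        ((u i).toNat + (∑ j, if v j then 1 else 0) = k * ((x i).toNat + (y i).toNat)) := by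
      intro v
      have hA : toR x i = (((x i).toNat : ℕ) : ℝ) := by cases hb : x i <;> simp [toR, hb]
      have hB : toR y i = (((y i).toNat : ℕ) : ℝ) := by cases hb : y i <;> simp [toR, hb]
      have hCc : toR u i = (((u i).toNat : ℕ) : ℝ) := by cases hb : u i <;> simp [toR, hb]
      have hS : (∑ j, if v j then (1:ℝ) else 0) = ((∑ j, if v j then 1 else 0 : ℕ) : ℝ) := by
        push_cast; rfl
      rw [hA, hB, hCc, hS]
      obtain ⟨s, hs⟩ : ∃ s : ℕ, (∑ j, if v j then 1 else 0) = s := ⟨_, rfl⟩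
      rw [hs]
      obtain ⟨X, hX⟩ : ∃ X : ℕ, (x i).toNat = X := ⟨_, rfl⟩
      obtain ⟨Y, hY⟩ : ∃ Y : ℕ, (y i).toNat = Y := ⟨_, rfl⟩
      obtain ⟨U, hU⟩ : ∃ U : ℕ, (u i).toNat = U := ⟨_, rfl⟩
      rw [hX, hY, hU]
      constructor
      · intro h
        have h2 : ((U : ℝ) + s) = k * (X + Y) := by field_simp at h; linarith
        have : ((U + s : ℕ) : ℝ) = ((k * (X + Y) : ℕ) : ℝ) := by push_cast; linarith
        exact_mod_cast this
      · intro h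
        have h2 : ((U : ℝ) + s) = k * (X + Y) := by
          have := congrArg (fun t : ℕ => (t : ℝ)) h
          push_cast at this; linarith
        field_simp
        linarith
    rw [Nat.card_congr (Equiv.subtypeEquivRight hiff)]
    cases hx : x i <;> cases hy : y i <;> cases hui : u i <;>
      obtain ⟨hu1, hu2⟩ := hu i <;>
      rw [hx, hy, hui] at hu1 hu2 <;>
      simp only [Bool.toNat_false, Bool.toNat_true]
    · -- ff ff, u ff : need sum = 0
      have h0 : ∀ v : Fin (2 * k - 1) → Bool,
          (0 + (∑ j, if v j then 1 else 0) = k * (0 + 0)) ↔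
          ((∑ j, if v j then 1 else 0) = 0) := fun v => by omega
      rw [Nat.card_congr (Equiv.subtypeEquivRight h0), card_sum_eq]
      simp
    · exact absurd hu2 (by decide)
    · -- ff tt, u ff : sum = k
      have h0 : ∀ v : Fin (2 * k - 1) → Bool,
          (0 + (∑ j, if v j then 1 else 0) = k * (0 + 1)) ↔
          ((∑ j, if v j then 1 else 0) = k) := fun v => by omega
      rw [Nat.card_congr (Equiv.subtypeEquivRight h0), card_sum_eq]
      simp [hC]
    · -- ff tt, u tt : sum = k - 1
      have h0 : ∀ v : Fin (2 * k - 1) → Bool,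
          (1 + (∑ j, if v j then 1 else 0) = k * (0 + 1)) ↔
          ((∑ j, if v j then 1 else 0) = k - 1) := fun v => by omega
      rw [Nat.card_congr (Equiv.subtypeEquivRight h0), card_sum_eq]
      have h1 : 2 * k - 1 - k = k - 1 := by omega
      rw [hC, ← h1, Nat.choose_symm (by omega)]
      simp
    · -- tt ff, u ff : sum = k
      have h0 : ∀ v : Fin (2 * k - 1) → Bool,
          (0 + (∑ j, if v j then 1 else 0) = k * (1 + 0)) ↔
          ((∑ j, if v j then 1 else 0) = k) := fun v => by omega
      rw [Nat.card_congr (Equiv.subtypeEquivRight h0), card_sum_eq]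
      simp [hC]
    · -- tt ff, u tt : sum = k - 1
      have h0 : ∀ v : Fin (2 * k - 1) → Bool,
          (1 + (∑ j, if v j then 1 else 0) = k * (1 + 0)) ↔
          ((∑ j, if v j then 1 else 0) = k - 1) := fun v => by omega
      rw [Nat.card_congr (Equiv.subtypeEquivRight h0), card_sum_eq]
      have h1 : 2 * k - 1 - k = k - 1 := by omega
      rw [hC, ← h1, Nat.choose_symm (by omega)]
      simp
    · exact absurd hu1 (by decide)
    · -- tt tt, u tt : sum = 2k-1
      have h0 : ∀ v : Fin (2 * k - 1) → Bool,
          (1 + (∑ j, if v j then 1 else 0) = k * (1 + 1)) ↔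
          ((∑ j, if v j then 1 else 0) = 2 * k - 1) := fun v => by omega
      rw [Nat.card_congr (Equiv.subtypeEquivRight h0), card_sum_eq, Nat.choose_self]
      simp
  calc ∏ i, Nat.card {v : Fin (2 * k - 1) → Bool //
        (toR x i + toR y i) / 2 =
          (1 / (2 * k : ℝ)) * (toR u i + ∑ j, if v j then (1:ℝ) else 0)}
      = ∏ i, (if x i ≠ y i then C else 1) := Finset.prod_congr rfl (fun i _ => key i)
    _ = C ^ d := by
        rw [Finset.prod_ite, Finset.prod_const, Finset.prod_const, one_pow, mul_one, ← hd]
        rfl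
end
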